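/- Let k be a number field and G ⊆ GL(V) an algebraic group over k for which G(A_k) = G(k) · G(A_k)^Λ (class number one with respect to the O_k-lattice Λ_k), i.e., any two O_k-lattices in V_k in the same adelic genus of Λ are in the same G_k-orbit. Then for every Galois extension K/k with group Γ, the map H^1(Γ, G_K^Λ) → H^1(Γ, G_K) × ∏_v H^1(Γ_v, G_{K_w}^{Λ_w}) has trivial kernel. -/

import Mathlib

/-! Nonabelian first group cohomology. -/

section NonabelianH1

variable (G A : Type*) [Group G] [Group A] [MulDistribMulAction G A]

/-- A 1-cocycle of `G` with values in the `G`-group `A`. -/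
def IsCocycle (α : G → A) : Prop := ∀ h g : G, α (h * g) = α h * h • α g

/-- The set of 1-cocycles. -/
def Cocycle := {α : G → A // IsCocycle G A α}

variable {G A}

/-- Two cocycles are cohomologous if they differ by a coboundary. -/
def Cohomologous (α β : Cocycle G A) : Prop :=
  ∃ a : A, ∀ g : G, α.1 g = a⁻¹ * β.1 g * g • a

variable (G A)

/-- Nonabelian first cohomology: cocycles modulo coboundaries. -/
def H1 := Quot (Cohomologous (G := G) (A := A))

/-- The class of a cocycle. -/
def H1.mk (α : Cocycle G A) : H1 G A := Quot.mk _ α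

/-- The trivial (constant `1`) cocycle. -/
def trivialCocycle : Cocycle G A := ⟨fun _ => 1, fun _ _ => by simp⟩

/-- The distinguished point of `H1 G A`. -/
def H1.one : H1 G A := H1.mk G A (trivialCocycle G A)

variable {G A}

/-- The map on `H1` induced by a `G`-equivariant group homomorphism. -/
def H1.map {B : Type*} [Group B] [MulDistribMulAction G B]
    (f : A →* B) (hf : ∀ (g : G) (a : A), f (g • a) = g • f a) :
    H1 G A → H1 G B :=
  Quot.map
    (fun α => ⟨fun g => f (α.1 g), by
      intro h g
      show f (α.1 (h * g)) = f (α.1 h) * h • f (α.1 g)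
      rw [α.2 h g, map_mul, hf]⟩)
    (by
      rintro α β ⟨a, ha⟩
      refine ⟨f a, fun g => ?_⟩
      show f (α.1 g) = (f a)⁻¹ * f (β.1 g) * g • f a
      rw [ha g, map_mul, map_mul, map_inv, hf])

/-- The map on `H1` induced by restriction along `r : G' →* G` together with an
`r`-equivariant homomorphism of coefficients. -/
def H1.mapRes {G' : Type*} [Group G'] (r : G' →* G)
    {B : Type*} [Group B] [MulDistribMulAction G' B]
    (f : A →* B) (hf : ∀ (g : G') (a : A), f (r g • a) = g • f a) :
    H1 G A → H1 G' B :=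
  Quot.map
    (fun α => ⟨fun g => f (α.1 (r g)), by
      intro h g
      show f (α.1 (r (h * g))) = f (α.1 (r h)) * h • f (α.1 (r g))
      rw [map_mul r, α.2 (r h) (r g), map_mul, hf]⟩)
    (by
      rintro α β ⟨a, ha⟩
      refine ⟨f a, fun g => ?_⟩
      show f (α.1 (r g)) = (f a)⁻¹ * f (β.1 (r g)) * g • f a
      rw [ha (r g), map_mul, map_mul, map_inv, hf])

/-- Multiplication on `H1` with commutative coefficients. -/
def H1.mul {G A : Type*} [Group G] [CommGroup A] [MulDistribMulAction G A] :
    H1 G A → H1 G A → H1 G A :=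
  Quot.map₂
    (fun α β => ⟨fun g => α.1 g * β.1 g, by
      intro h g
      show α.1 (h * g) * β.1 (h * g) = α.1 h * β.1 h * h • (α.1 g * β.1 g)
      rw [α.2 h g, β.2 h g, smul_mul']
      exact mul_mul_mul_comm _ _ _ _⟩)
    (by
      rintro α β γ ⟨a, ha⟩
      refine ⟨a, fun g => ?_⟩
      show α.1 g * β.1 g = a⁻¹ * (α.1 g * γ.1 g) * g • a
      rw [ha g]
      ac_rfl)
    (by
      rintro α β γ ⟨a, ha⟩
      refine ⟨a, fun g => ?_⟩
      show α.1 g * γ.1 g = a⁻¹ * (β.1 g * γ.1 g) * g • a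
      rw [ha g]
      ac_rfl)

end NonabelianH1

section Lattices

variable {Γ GK X : Type*} [Group Γ] [Group GK] [MulDistribMulAction Γ GK]
  [MulAction GK X] [MulAction Γ X]

/-- The action of the Galois group `Γ` on the stabilizer of a `Γ`-stable lattice `Λ`. -/
def stabAction
    (compat : ∀ (σ : Γ) (g : GK) (x : X), σ • (g • x) = (σ • g) • (σ • x))
    (Λ : X) (hΛ : ∀ σ : Γ, σ • Λ = Λ) :
    MulDistribMulAction Γ (MulAction.stabilizer GK Λ) :=
  { smul := fun σ g => ⟨σ • (g : GK), by
      rw [MulAction.mem_stabilizer_iff]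
      calc (σ • (g : GK)) • Λ = (σ • (g : GK)) • (σ • Λ) := by rw [hΛ]
        _ = σ • ((g : GK) • Λ) := (compat σ (g : GK) Λ).symm
        _ = σ • Λ := by rw [MulAction.mem_stabilizer_iff.mp g.2]
        _ = Λ := hΛ σ⟩,
    one_smul := fun g => Subtype.ext (one_smul Γ (g : GK)),
    mul_smul := fun σ τ g => Subtype.ext (mul_smul σ τ (g : GK)),
    smul_mul := fun σ g h => Subtype.ext (smul_mul' σ (g : GK) (h : GK)),
    smul_one := fun σ => Subtype.ext (smul_one σ) }

/-- The homomorphism from the stabilizer of a lattice `Λ` to the stabilizer of its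
localization `ℓ Λ`, induced by a localization homomorphism `gmap` of the acting groups. -/
def locStabHom {GK GK' X X' : Type*} [Group GK] [Group GK'] [MulAction GK X] [MulAction GK' X']
    (gmap : GK →* GK') (ℓ : X → X') (Λ : X)
    (hℓ : ∀ (g : GK) (x : X), ℓ (g • x) = gmap g • ℓ x) :
    MulAction.stabilizer GK Λ →* MulAction.stabilizer GK' (ℓ Λ) where
  toFun s := ⟨gmap (s : GK), by
    rw [MulAction.mem_stabilizer_iff, ← hℓ, MulAction.mem_stabilizer_iff.mp s.2]⟩
  map_one' := Subtype.ext (by simp)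
  map_mul' a b := Subtype.ext (by simp)

/-!
A cocycle `α` with values in `G_K^Λ` that dies in `H¹(Γ, G_K)` is `σ ↦ a⁻¹ · σa` for some
`a ∈ G_K`, and then `a • Λ` is a `Γ`-stable lattice in the `G_K`-orbit of `Λ`. Local triviality
of `α` at `v` says `gmap a = g_v b` with `g_v` fixed by `Γ_v` and `b` stabilizing `Λ_w`, so
`a • Λ` is everywhere locally in the orbit of `Λ`. Class number one then gives a `Γ`-fixed
`g ∈ G_K` with `g • Λ = a • Λ`, and `g⁻¹ a ∈ G_K^Λ` splits `α` already in `H¹(Γ, G_K^Λ)`.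
-/

section Coboundary

variable {G A : Type*} [Group G] [Group A] [MulDistribMulAction G A]

theorem Cohomologous.equivalence : Equivalence (Cohomologous (G := G) (A := A)) where
  refl _ := ⟨1, fun g => by simp⟩
  symm := by
    rintro α β ⟨a, ha⟩
    refine ⟨a⁻¹, fun g => ?_⟩
    rw [ha g, smul_inv']
    group
  trans := by
    rintro α β γ ⟨a, ha⟩ ⟨b, hb⟩
    refine ⟨b * a, fun g => ?_⟩
    rw [ha g, hb g, smul_mul']
    group

theorem H1.mk_eq_one_iff {α : Cocycle G A} :
    H1.mk G A α = H1.one G A ↔ ∃ a : A, ∀ g : G, α.1 g = a⁻¹ * g • a := by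
  refine (Quot.eq.trans Cohomologous.equivalence.eqvGen_iff).trans ?_
  simp only [Cohomologous, trivialCocycle, mul_one]

theorem H1.exists_coboundary_of_mk_eq_one {S : Subgroup A} [MulDistribMulAction G S]
    (hS : ∀ (g : G) (s : S), ((g • s : S) : A) = g • (s : A)) {α : Cocycle G S}
    (h : H1.mk G S α = H1.one G S) :
    ∃ b : S, ∀ g : G, (α.1 g : A) = (b : A)⁻¹ * g • (b : A) := by
  obtain ⟨b, hb⟩ := H1.mk_eq_one_iff.mp h
  exact ⟨b, fun g => by rw [hb g, Subgroup.coe_mul, Subgroup.coe_inv, hS]⟩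

theorem smul_mul_inv_eq_of_coboundary_eq {a b : A} (h : ∀ g : G, a⁻¹ * g • a = b⁻¹ * g • b)
    (g : G) : g • (a * b⁻¹) = a * b⁻¹ := by
  have hga : g • a = a * b⁻¹ * g • b := by
    rw [mul_assoc, ← h g]
    group
  rw [smul_mul', smul_inv', hga]
  group

end Coboundary

section Stabilizer

open MulAction

variable {Γ GK X : Type*} [Group Γ] [Group GK] [MulDistribMulAction Γ GK] [MulAction GK X]
  {Λ : X}

theorem smul_smul_eq_of_coboundary_mem_stabilizer [MulAction Γ X]
    (compat : ∀ (σ : Γ) (g : GK) (x : X), σ • (g • x) = (σ • g) • (σ • x))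
    (hΛ : ∀ σ : Γ, σ • Λ = Λ) {a : GK}
    (ha : ∀ σ : Γ, a⁻¹ * σ • a ∈ stabilizer GK Λ) (σ : Γ) : σ • a • Λ = a • Λ := by
  rw [compat, hΛ, ← mul_inv_cancel_left a (σ • a), mul_smul, mem_stabilizer_iff.mp (ha σ)]

theorem H1.mk_eq_one_of_fixed_smul_eq [MulDistribMulAction Γ (stabilizer GK Λ)]
    (hS : ∀ (σ : Γ) (s : stabilizer GK Λ), ((σ • s : stabilizer GK Λ) : GK) = σ • (s : GK))
    {α : Cocycle Γ (stabilizer GK Λ)} {a : GK} (ha : ∀ σ : Γ, (α.1 σ : GK) = a⁻¹ * σ • a)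
    {g : GK} (hg : ∀ σ : Γ, σ • g = g) (hgΛ : g • Λ = a • Λ) :
    H1.mk Γ _ α = H1.one Γ _ := by
  have hmem : g⁻¹ * a ∈ stabilizer GK Λ := by
    rw [mem_stabilizer_iff, mul_smul, ← hgΛ, inv_smul_smul]
  refine H1.mk_eq_one_iff.mpr ⟨⟨g⁻¹ * a, hmem⟩, fun σ => Subtype.ext ?_⟩
  rw [Subgroup.coe_mul, Subgroup.coe_inv, hS, ha σ]
  simp only [smul_mul', smul_inv', hg σ]
  group

end Stabilizer

theorem exists_fixed_smul_eq_of_coboundary_eq {Γ Γ' GK GK' X X' : Type*} [Group Γ] [Group Γ']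
    [Group GK] [Group GK'] [MulDistribMulAction Γ GK] [MulDistribMulAction Γ' GK']
    [MulAction GK X] [MulAction GK' X'] (r : Γ' →* Γ) (gmap : GK →* GK') (ℓ : X → X')
    (hℓ : ∀ (g : GK) (x : X), ℓ (g • x) = gmap g • ℓ x)
    (hg : ∀ (τ : Γ') (g : GK), gmap (r τ • g) = τ • gmap g)
    {Λ : X} {a : GK} {b : GK'} (hb : b • ℓ Λ = ℓ Λ)
    (hab : ∀ τ : Γ', gmap (a⁻¹ * r τ • a) = b⁻¹ * τ • b) :
    ∃ gv : GK', (∀ τ : Γ', τ • gv = gv) ∧ gv • ℓ Λ = ℓ (a • Λ) := by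
  refine ⟨gmap a * b⁻¹, smul_mul_inv_eq_of_coboundary_eq fun τ => ?_, ?_⟩
  · rw [← hab τ, map_mul, map_inv, hg]
  · rw [mul_smul, inv_smul_eq_iff.mpr hb.symm, hℓ]

/-- (Class number one kills the VC-genus.)  Suppose the algebraic group `G`
has class number one with respect to the lattice `Λ`: any `Γ`-stable lattice in the `G_K`-orbit
of `Λ` which is everywhere locally in the `G_{k_v}`-orbit of `Λ` is in the `G_k`-orbit of `Λ`.
Then for every Galois extension `K/k` the combined map
`H¹(Γ, G_K^Λ) → H¹(Γ, G_K) × ∏_v H¹(Γ_v, G_{K_w}^{Λ_w})` has trivial kernel. -/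
theorem statement_16 {Γ GK X ι : Type*} [Group Γ] [Group GK] [MulDistribMulAction Γ GK]
    [MulAction GK X] [MulAction Γ X]
    (compat : ∀ (σ : Γ) (g : GK) (x : X), σ • (g • x) = (σ • g) • (σ • x))
    (Λ : X) (hΛ : ∀ σ : Γ, σ • Λ = Λ)
    {Γv : ι → Type*} [∀ v, Group (Γv v)] (r : ∀ v, Γv v →* Γ)
    {GKv : ι → Type*} [∀ v, Group (GKv v)] [∀ v, MulDistribMulAction (Γv v) (GKv v)]
    {Xv : ι → Type*} [∀ v, MulAction (GKv v) (Xv v)] [∀ v, MulAction (Γv v) (Xv v)]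
    (compatv : ∀ v (τ : Γv v) (g : GKv v) (x : Xv v), τ • (g • x) = (τ • g) • (τ • x))
    (ℓ : ∀ v, X → Xv v) (gmap : ∀ v, GK →* GKv v)
    (hℓ : ∀ v (g : GK) (x : X), ℓ v (g • x) = gmap v g • ℓ v x)
    (hℓΓ : ∀ v (τ : Γv v) (x : X), ℓ v (r v τ • x) = τ • ℓ v x)
    (hg : ∀ v (τ : Γv v) (g : GK), gmap v (r v τ • g) = τ • gmap v g)
    (hclass : ∀ L : X, (∀ σ : Γ, σ • L = L) → (∃ φ : GK, φ • Λ = L) →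
      (∀ v, ∃ gv : GKv v, (∀ τ : Γv v, τ • gv = gv) ∧ gv • ℓ v Λ = ℓ v L) →
      ∃ g : GK, (∀ σ : Γ, σ • g = g) ∧ g • Λ = L) :
    ∀ c : @H1 Γ (MulAction.stabilizer GK Λ) _ _ (stabAction compat Λ hΛ),
      @H1.map Γ (MulAction.stabilizer GK Λ) _ _ (stabAction compat Λ hΛ) GK _ _
        (MulAction.stabilizer GK Λ).subtype (fun _ _ => rfl) c = H1.one Γ GK →
      (∀ v : ι,
        @H1.mapRes Γ (MulAction.stabilizer GK Λ) _ _ (stabAction compat Λ hΛ)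
          (Γv v) _ (r v) (MulAction.stabilizer (GKv v) (ℓ v Λ)) _
          (stabAction (compatv v) (ℓ v Λ) (fun τ => by rw [← hℓΓ v τ Λ, hΛ]))
          (locStabHom (gmap v) (ℓ v) Λ (hℓ v))
          (fun τ s => by exact Subtype.ext (hg v τ (s : GK))) c
        = @H1.one (Γv v) (MulAction.stabilizer (GKv v) (ℓ v Λ)) _ _
            (stabAction (compatv v) (ℓ v Λ) (fun τ => by rw [← hℓΓ v τ Λ, hΛ]))) →
      c = @H1.one Γ (MulAction.stabilizer GK Λ) _ _ (stabAction compat Λ hΛ) := by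
  let := stabAction compat Λ hΛ
  intro c hglobal hlocal
  obtain ⟨α, rfl⟩ := Quot.exists_rep c
  obtain ⟨a, ha⟩ := H1.mk_eq_one_iff.mp hglobal
  have hLΓ : ∀ σ : Γ, σ • a • Λ = a • Λ :=
    smul_smul_eq_of_coboundary_mem_stabilizer compat hΛ fun σ => ha σ ▸ (α.1 σ).2
  have hLloc (v : ι) :
      ∃ gv : GKv v, (∀ τ : Γv v, τ • gv = gv) ∧ gv • ℓ v Λ = ℓ v (a • Λ) := by
    let := stabAction (compatv v) (ℓ v Λ) (fun τ => by rw [← hℓΓ v τ Λ, hΛ])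
    obtain ⟨b, hb⟩ := H1.exists_coboundary_of_mk_eq_one (fun _ _ => rfl) (hlocal v)
    refine exists_fixed_smul_eq_of_coboundary_eq (r v) (gmap v) (ℓ v) (hℓ v) (hg v)
      (MulAction.mem_stabilizer_iff.mp b.2) fun τ => ?_
    rw [← ha (r v τ)]
    exact hb τ
  obtain ⟨g, hgΓ, hgΛ⟩ := hclass (a • Λ) hLΓ ⟨a, rfl⟩ hLloc
  exact H1.mk_eq_one_of_fixed_smul_eq (fun _ _ => rfl) ha hgΓ hgΛ
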